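/- Let B_1,…,B_p satisfy B_i^T + B_i ≤ 0, let u be a piecewise constant input with switching times (a_n), and let x ∈ R^d. Suppose (a_{n_k}) is a sequence of switching times with Φ_u(a_{n_k})x → l, the input value u_{n_k} equals a fixed index i for all k, and the durations δ_{n_k} = a_{n_k+1} − a_{n_k} are bounded below by some δ > 0. Then l ∈ V_i = {y : ‖e^{tB_i}y‖ = ‖y‖ for all t ∈ R}. -/

import Mathlib

/-!
Since `d/ds ‖e^{sA}y‖² = zᵀ(Aᵀ + A)z ≤ 0` for `z = e^{sA}y`, the squared norm is nonincreasing
along every trajectory. Hence `‖Φ(aₙ)x‖²` decreases to `‖l‖²`, and for `s ∈ [0, δ]` the value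
`‖e^{sBᵢ}Φ(a_{n_k})x‖²` is squeezed between `‖Φ(a_{n_k+1})x‖²` and `‖Φ(a_{n_k})x‖²`. In the limit,
`s ↦ ‖e^{sBᵢ}l‖²` equals `‖l‖²` on `[0, δ]`; being real analytic, it equals `‖l‖²` everywhere.
-/

open Matrix Filter

/-- The Euclidean norm on `ℝ^d`. -/
noncomputable def eNorm {d : ℕ} (x : Fin d → ℝ) : ℝ := Real.sqrt (x ⬝ᵥ x)

open NormedSpace Topology

section MatrixExp

-- Any submultiplicative norm makes `exp` available here; the theorems below mention no matrix norm.
attribute [local instance] Matrix.linftyOpNormedRing Matrix.linftyOpNormedAlgebra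

variable {d : ℕ} (A : Matrix (Fin d) (Fin d) ℝ) (y : Fin d → ℝ)

noncomputable def mulVecRightCLM : Matrix (Fin d) (Fin d) ℝ →L[ℝ] (Fin d → ℝ) :=
  LinearMap.toContinuousLinearMap ((Matrix.toLin' (R := ℝ)).toLinearMap.flip y)

theorem hasDerivAt_exp_smul_mulVec (t : ℝ) :
    HasDerivAt (fun s : ℝ => exp (s • A) *ᵥ y) (A *ᵥ (exp (t • A) *ᵥ y)) t := by
  rw [mulVec_mulVec]
  exact (mulVecRightCLM y).hasFDerivAt.comp_hasDerivAt t (hasDerivAt_exp_smul_const' A t)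

theorem analyticAt_exp_smul_mulVec (t : ℝ) :
    AnalyticAt ℝ (fun s : ℝ => exp (s • A) *ᵥ y) t :=
  (mulVecRightCLM y).analyticAt _ |>.comp <|
    (exp_analytic _).comp (analyticAt_id.smul analyticAt_const)

end MatrixExp

section DotProduct

variable {d : ℕ} {f g : ℝ → Fin d → ℝ} {t : ℝ}

theorem HasDerivAt.dotProduct {f' g' : Fin d → ℝ} (hf : HasDerivAt f f' t)
    (hg : HasDerivAt g g' t) :
    HasDerivAt (fun s => f s ⬝ᵥ g s) (f' ⬝ᵥ g t + f t ⬝ᵥ g') t := by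
  have hfj := hasDerivAt_pi.1 hf
  have hgj := hasDerivAt_pi.1 hg
  simp only [_root_.dotProduct, ← Finset.sum_add_distrib]
  exact HasDerivAt.fun_sum fun j _ => (hfj j).mul (hgj j)

theorem AnalyticAt.dotProduct (hf : AnalyticAt ℝ f t) (hg : AnalyticAt ℝ g t) :
    AnalyticAt ℝ (fun s => f s ⬝ᵥ g s) t := by
  have hfj (j : Fin d) : AnalyticAt ℝ (fun s => f s j) t := analyticAt_pi_iff.1 hf j
  have hgj (j : Fin d) : AnalyticAt ℝ (fun s => g s j) t := analyticAt_pi_iff.1 hg j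
  simp only [_root_.dotProduct]
  fun_prop

end DotProduct

section DissipativeFlow

variable {d : ℕ} (A : Matrix (Fin d) (Fin d) ℝ) (y : Fin d → ℝ)

theorem hasDerivAt_dotProduct_self_exp_smul_mulVec (t : ℝ) :
    HasDerivAt (fun s : ℝ => (exp (s • A) *ᵥ y) ⬝ᵥ (exp (s • A) *ᵥ y))
      ((exp (t • A) *ᵥ y) ⬝ᵥ ((Aᵀ + A) *ᵥ (exp (t • A) *ᵥ y))) t := by
  have h := hasDerivAt_exp_smul_mulVec A y t
  convert h.dotProduct h using 1
  rw [add_mulVec, dotProduct_add, dotProduct_mulVec, vecMul_transpose]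

theorem antitone_dotProduct_self_exp_smul_mulVec
    (hA : ∀ x : Fin d → ℝ, x ⬝ᵥ ((Aᵀ + A) *ᵥ x) ≤ 0) :
    Antitone fun s : ℝ => (exp (s • A) *ᵥ y) ⬝ᵥ (exp (s • A) *ᵥ y) :=
  antitone_of_deriv_nonpos
    (fun t => (hasDerivAt_dotProduct_self_exp_smul_mulVec A y t).differentiableAt)
    fun t => (hasDerivAt_dotProduct_self_exp_smul_mulVec A y t).deriv ▸ hA _

theorem dotProduct_self_exp_smul_mulVec_eq_of_eqOn_Ioo {δ : ℝ} (hδ : 0 < δ)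
    (h : ∀ s ∈ Set.Ioo 0 δ, (exp (s • A) *ᵥ y) ⬝ᵥ (exp (s • A) *ᵥ y) = y ⬝ᵥ y) (t : ℝ) :
    (exp (t • A) *ᵥ y) ⬝ᵥ (exp (t • A) *ᵥ y) = y ⬝ᵥ y := by
  have hanalytic : AnalyticOnNhd ℝ
      (fun s : ℝ => (exp (s • A) *ᵥ y) ⬝ᵥ (exp (s • A) *ᵥ y)) Set.univ := fun s _ =>
    (analyticAt_exp_smul_mulVec A y s).dotProduct (analyticAt_exp_smul_mulVec A y s)
  have hfreq : ∃ᶠ s in 𝓝[≠] (δ / 2), (exp (s • A) *ᵥ y) ⬝ᵥ (exp (s • A) *ᵥ y) = y ⬝ᵥ y :=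
    (eventually_nhdsWithin_of_eventually_nhds
      (eventually_of_mem (Ioo_mem_nhds (by linarith) (by linarith)) h)).frequently
  exact congrFun (hanalytic.eq_of_frequently_eq analyticOnNhd_const hfreq) t

end DissipativeFlow

section SwitchedSystem

variable {d p : ℕ} {B : Fin p → Matrix (Fin d) (Fin d) ℝ} {a : ℕ → ℝ} {v : ℕ → Fin p}
  {Φ : ℝ → Matrix (Fin d) (Fin d) ℝ}

theorem mulVec_add_eq_exp_smul_mulVec
    (hΦ : ∀ n, ∀ t ∈ Set.Icc (a n) (a (n + 1)), Φ t = exp ((t - a n) • B (v n)) * Φ (a n))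
    (x : Fin d → ℝ) {n : ℕ} {s : ℝ} (hs : s ∈ Set.Icc 0 (a (n + 1) - a n)) :
    Φ (a n + s) *ᵥ x = exp (s • B (v n)) *ᵥ (Φ (a n) *ᵥ x) := by
  rw [hΦ n _ ⟨by linarith [hs.1], by linarith [hs.2]⟩, add_sub_cancel_left, mulVec_mulVec]

theorem dotProduct_self_exp_smul_mulVec_mem_Icc
    (hB : ∀ i, ∀ x : Fin d → ℝ, x ⬝ᵥ (((B i)ᵀ + B i) *ᵥ x) ≤ 0)
    (hΦ : ∀ n, ∀ t ∈ Set.Icc (a n) (a (n + 1)), Φ t = exp ((t - a n) • B (v n)) * Φ (a n))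
    (x : Fin d → ℝ) {n : ℕ} {s : ℝ} (hs : s ∈ Set.Icc 0 (a (n + 1) - a n)) :
    (exp (s • B (v n)) *ᵥ (Φ (a n) *ᵥ x)) ⬝ᵥ (exp (s • B (v n)) *ᵥ (Φ (a n) *ᵥ x)) ∈
      Set.Icc ((Φ (a (n + 1)) *ᵥ x) ⬝ᵥ (Φ (a (n + 1)) *ᵥ x))
        ((Φ (a n) *ᵥ x) ⬝ᵥ (Φ (a n) *ᵥ x)) := by
  have hanti := antitone_dotProduct_self_exp_smul_mulVec (B (v n)) (Φ (a n) *ᵥ x) (hB (v n))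
  have hend : Φ (a (n + 1)) *ᵥ x = exp ((a (n + 1) - a n) • B (v n)) *ᵥ (Φ (a n) *ᵥ x) := by
    rw [← mulVec_add_eq_exp_smul_mulVec hΦ x ⟨hs.1.trans hs.2, le_rfl⟩, add_sub_cancel]
  refine ⟨hend ▸ hanti hs.2, ?_⟩
  simpa using hanti hs.1

theorem antitone_dotProduct_self_mulVec
    (hB : ∀ i, ∀ x : Fin d → ℝ, x ⬝ᵥ (((B i)ᵀ + B i) *ᵥ x) ≤ 0) (hamono : Monotone a)
    (hΦ : ∀ n, ∀ t ∈ Set.Icc (a n) (a (n + 1)), Φ t = exp ((t - a n) • B (v n)) * Φ (a n))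
    (x : Fin d → ℝ) :
    Antitone fun n => (Φ (a n) *ᵥ x) ⬝ᵥ (Φ (a n) *ᵥ x) :=
  antitone_nat_of_succ_le fun n =>
    (dotProduct_self_exp_smul_mulVec_mem_Icc hB hΦ x
      ⟨le_rfl, sub_nonneg.2 (hamono n.le_succ)⟩).1.trans (by simp)

end SwitchedSystem

theorem limit_mem_norm_preserved_subspace_general {d p : ℕ}
    (B : Fin p → Matrix (Fin d) (Fin d) ℝ)
    (hB : ∀ i, ∀ x : Fin d → ℝ, x ⬝ᵥ (((B i)ᵀ + B i).mulVec x) ≤ 0)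
    (a : ℕ → ℝ) (hamono : StrictMono a)
    (v : ℕ → Fin p)
    (Φ : ℝ → Matrix (Fin d) (Fin d) ℝ)
    (hΦ : ∀ n, ∀ t ∈ Set.Icc (a n) (a (n + 1)),
      Φ t = NormedSpace.exp ((t - a n) • B (v n)) * Φ (a n))
    (x : Fin d → ℝ) (l : Fin d → ℝ) (i : Fin p) (δ : ℝ) (hδ : 0 < δ)
    (nk : ℕ → ℕ) (hnk : StrictMono nk)
    (hval : ∀ k, v (nk k) = i)
    (hdur : ∀ k, δ ≤ a (nk k + 1) - a (nk k))
    (hlim : Tendsto (fun k => (Φ (a (nk k))).mulVec x) atTop (nhds l)) :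
    ∀ t : ℝ, eNorm ((NormedSpace.exp (t • B i)).mulVec l) = eNorm l := by
  have hanti := antitone_dotProduct_self_mulVec hB hamono.monotone hΦ x
  obtain ⟨L, hL⟩ : ∃ L, Tendsto (fun n => (Φ (a n) *ᵥ x) ⬝ᵥ (Φ (a n) *ᵥ x)) atTop (𝓝 L) :=
    ⟨_, tendsto_atTop_ciInf hanti ⟨0, by rintro _ ⟨n, rfl⟩; exact dotProduct_self_star_nonneg _⟩⟩
  have hstart := hL.comp hnk.tendsto_atTop
  have hend := hL.comp (tendsto_atTop_mono (fun k => (nk k).le_succ) hnk.tendsto_atTop)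
  have hLl : L = l ⬝ᵥ l :=
    tendsto_nhds_unique hstart (((continuous_id.dotProduct continuous_id).tendsto l).comp hlim)
  have hnorm_Icc (s : ℝ) (hs : s ∈ Set.Icc 0 δ) :
      (exp (s • B i) *ᵥ l) ⬝ᵥ (exp (s • B i) *ᵥ l) = l ⬝ᵥ l := by
    have hmem k := hval k ▸
      dotProduct_self_exp_smul_mulVec_mem_Icc hB hΦ x (n := nk k) ⟨hs.1, hs.2.trans (hdur k)⟩
    refine tendsto_nhds_unique
      (((Continuous.dotProduct (by fun_prop) (by fun_prop)).tendsto l).comp hlim) ?_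
    rw [← hLl]
    exact tendsto_of_tendsto_of_tendsto_of_le_of_le hend hstart (fun k => (hmem k).1)
      (fun k => (hmem k).2)
  intro t
  exact congrArg Real.sqrt <| dotProduct_self_exp_smul_mulVec_eq_of_eqOn_Ioo (B i) l hδ
    (fun s hs => hnorm_Icc s (Set.Ioo_subset_Icc_self hs)) t

/-- If `Φ_u(a_{n_k})x → l` along a sequence of switching times at which the input value is a
fixed `i` and the durations are bounded below by `δ > 0`, then `l ∈ V_i`. -/
theorem limit_mem_norm_preserved_subspace {d p : ℕ}
    (B : Fin p → Matrix (Fin d) (Fin d) ℝ)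
    (hB : ∀ i, ∀ x : Fin d → ℝ, x ⬝ᵥ (((B i)ᵀ + B i).mulVec x) ≤ 0)
    (a : ℕ → ℝ) (ha0 : a 0 = 0) (hamono : StrictMono a) (hatop : Tendsto a atTop atTop)
    (v : ℕ → Fin p)
    (Φ : ℝ → Matrix (Fin d) (Fin d) ℝ) (hΦ0 : Φ 0 = 1)
    (hΦ : ∀ n, ∀ t ∈ Set.Icc (a n) (a (n + 1)),
      Φ t = NormedSpace.exp ((t - a n) • B (v n)) * Φ (a n))
    (x : Fin d → ℝ) (l : Fin d → ℝ) (i : Fin p) (δ : ℝ) (hδ : 0 < δ)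
    (nk : ℕ → ℕ) (hnk : StrictMono nk)
    (hval : ∀ k, v (nk k) = i)
    (hdur : ∀ k, δ ≤ a (nk k + 1) - a (nk k))
    (hlim : Tendsto (fun k => (Φ (a (nk k))).mulVec x) atTop (nhds l)) :
    ∀ t : ℝ, eNorm ((NormedSpace.exp (t • B i)).mulVec l) = eNorm l :=
  limit_mem_norm_preserved_subspace_general B hB a hamono v Φ hΦ x l i δ hδ nk hnk hval hdur hlim
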